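/- arXiv:0707.1718 — 4 statements merged into one kernel-verified Lean document; each statement's English description precedes it below -/
import Mathlib

section
/- Let C be a small category and let Δ/C be the category of simplices of the nerve of C (objects: functors X : [q] → C; morphisms X → Y: monotone maps ξ : [q_X] → [q_Y] with Y ∘ ξ = X). Then every surjective monotone map s_i : [q+1] → [q] induces, for each q-simplex Y, a morphism (X = Y ∘ s_i) → Y in Δ/C which becomes an isomorphism in the quotient category [Δ/C] obtained by identifying, for each surjection s with right inverses d, d', the induced maps d_* and d'_* (taking the smallest composition-compatible equivalence relation generated by these identifications). -/
open CategoryTheory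

/-- The category `Δ/C` of simplices of the nerve of `C`: objects are functors
`[q] ⥤ C`, morphisms are monotone reindexings commuting with the structure maps. -/
abbrev SimplexOver (C : Type) [SmallCategory C] : Type :=
  CostructuredArrow SimplexCategory.toCat (Cat.of C)

/-- The elementary relation: for a surjection `s : [q+1] → [q]` with `B = A ∘ s`,
any two sections of `s` induce elementary equivalent maps `A ⟶ B`. -/
def elemRel (C : Type) [SmallCategory C] : HomRel (SimplexOver C) := fun {A B} f g =>
  ∃ s : B.left ⟶ A.left,
    Function.Surjective s.toOrderHom ∧
    B.left.len = A.left.len + 1 ∧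
    B.hom = SimplexCategory.toCat.map s ≫ A.hom ∧
    f.left ≫ s = 𝟙 A.left ∧ g.left ≫ s = 𝟙 A.left

/-- The quotient category `[Δ/C]` of `Δ/C` by the smallest composition-compatible
equivalence relation generated by the elementary equivalences. -/
abbrev SdQuot (C : Type) [SmallCategory C] : Type :=
  CategoryTheory.Quotient (elemRel C)

/-- A simplex of the nerve of `C` is nondegenerate if it factors through no
noninjective surjection. -/
def Nondeg {C : Type} [SmallCategory C] (X : SimplexOver C) : Prop :=
  ∀ (m : SimplexCategory) (s : X.left ⟶ m),
    Function.Surjective s.toOrderHom →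
    (∃ Y : SimplexCategory.toCat.obj m ⟶ Cat.of C,
      X.hom = SimplexCategory.toCat.map s ≫ Y) →
    Function.Injective s.toOrderHom

/-- The subdivision `Sd(C)`: the full subcategory of `[Δ/C]` spanned by the
nondegenerate simplices of the nerve of `C`. -/
abbrev Sd (C : Type) [SmallCategory C] : Type :=
  ObjectProperty.FullSubcategory (fun X : SdQuot C => Nondeg X.as)

/-- The dimension of an object of `Sd(C)`. -/
def dimS {C : Type} [SmallCategory C] (X : Sd C) : ℕ := X.obj.as.left.len

/-!
Let `A = Y ∘ σᵢ`. Already in `Δ/C`, `(δᵢ)_* ≫ (σᵢ)_* = 𝟙`. For the other composite, the simplicial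
identity `σᵢ ≫ δᵢ = δᵢ ≫ σᵢ₊₁` factors `(σᵢ)_* ≫ (δᵢ)_*` through the simplex `A ∘ σᵢ` one dimension
up, as the section `δᵢ` of `σᵢ` followed by `σᵢ₊₁`. In `[Δ/C]` this section may be replaced by the
other section `δᵢ₊₁`, and `δᵢ₊₁ ≫ σᵢ₊₁ = 𝟙`.
-/

open SimplexCategory

namespace SimplexOver

variable {C : Type} [SmallCategory C]

abbrev precomp {m n : SimplexCategory} (s : m ⟶ n) (Y : toCat.obj n ⟶ Cat.of C) :
    SimplexOver C :=
  CostructuredArrow.mk (toCat.map s ≫ Y)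

/-- `s_* : Y ∘ s ⟶ Y` -/
def precompHom {m n : SimplexCategory} (s : m ⟶ n) (Y : toCat.obj n ⟶ Cat.of C) :
    precomp s Y ⟶ CostructuredArrow.mk Y :=
  CostructuredArrow.homMk s rfl

/-- `d_* : Y ⟶ Y ∘ s` -/
def sectionHom {m n : SimplexCategory} {s : m ⟶ n} (d : n ⟶ m) (hd : d ≫ s = 𝟙 n)
    (Y : toCat.obj n ⟶ Cat.of C) : CostructuredArrow.mk Y ⟶ precomp s Y :=
  CostructuredArrow.homMk d (by
    change toCat.map d ≫ toCat.map s ≫ Y = Y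
    rw [← Category.assoc, ← Functor.map_comp, hd, CategoryTheory.Functor.map_id, Category.id_comp])

lemma sectionHom_comp_precompHom {m n : SimplexCategory} {s : m ⟶ n} (d : n ⟶ m)
    (hd : d ≫ s = 𝟙 n) (Y : toCat.obj n ⟶ Cat.of C) :
    sectionHom d hd Y ≫ precompHom s Y = 𝟙 _ :=
  CostructuredArrow.hom_ext _ _ hd

lemma elemRel_sectionHom {n : ℕ} {s : mk (n + 1) ⟶ mk n} (d d' : mk n ⟶ mk (n + 1))
    (hd : d ≫ s = 𝟙 _) (hd' : d' ≫ s = 𝟙 _) (Y : toCat.obj (mk n) ⟶ Cat.of C) :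
    elemRel C (sectionHom d hd Y) (sectionHom d' hd' Y) :=
  ⟨s, epi_iff_surjective.1 (SplitEpi.epi ⟨d, hd⟩), rfl, rfl, hd, hd'⟩

lemma quotient_map_precompHom_σ_comp_sectionHom_δ {q : ℕ} (i : Fin (q + 1))
    (Y : toCat.obj (mk q) ⟶ Cat.of C) :
    (Quotient.functor (elemRel C)).map
      (precompHom (σ i) Y ≫ sectionHom (δ i.castSucc) δ_comp_σ_self Y) = 𝟙 _ := by
  let A := precomp (σ i) Y
  let p : precomp (σ i.castSucc) A.hom ⟶ A := CostructuredArrow.homMk (σ i.succ) (by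
    simp only [A, precomp, CostructuredArrow.mk_hom_eq_self, ← Functor.map_comp_assoc,
      σ_comp_σ le_rfl])
  have h_factor : precompHom (σ i) Y ≫ sectionHom (δ i.castSucc) δ_comp_σ_self Y =
      sectionHom (δ i.castSucc.castSucc) δ_comp_σ_self A.hom ≫ p :=
    CostructuredArrow.hom_ext _ _ (δ_comp_σ_of_le le_rfl).symm
  have h_id : sectionHom (δ i.castSucc.succ) δ_comp_σ_succ A.hom ≫ p = 𝟙 A :=
    CostructuredArrow.hom_ext _ _ (δ_comp_σ_self' (Fin.succ_castSucc i).symm)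
  rw [h_factor, Functor.map_comp,
    CategoryTheory.Quotient.sound _ (elemRel_sectionHom _ _ δ_comp_σ_self δ_comp_σ_succ A.hom),
    ← Functor.map_comp, h_id]
  exact CategoryTheory.Functor.map_id _ _

end SimplexOver

open SimplexOver in
/-- Lemma 17: a surjection `σᵢ : Y∘σᵢ ⟶ Y` of `Δ/C` becomes an isomorphism in the
quotient category `[Δ/C]`. -/
theorem surjection_becomes_iso (C : Type) [SmallCategory C] (q : ℕ) (i : Fin (q + 1))
    (Y : SimplexCategory.toCat.obj (SimplexCategory.mk q) ⟶ Cat.of C) :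
    IsIso ((CategoryTheory.Quotient.functor (elemRel C)).map
      (CostructuredArrow.homMk (SimplexCategory.σ i) rfl :
        CostructuredArrow.mk (SimplexCategory.toCat.map (SimplexCategory.σ i) ≫ Y) ⟶
          CostructuredArrow.mk Y)) := by
  change IsIso ((Quotient.functor (elemRel C)).map (precompHom (σ i) Y))
  refine ⟨(Quotient.functor (elemRel C)).map (sectionHom (δ i.castSucc) δ_comp_σ_self Y), ?_, ?_⟩
  · rw [← Functor.map_comp]
    exact quotient_map_precompHom_σ_comp_sectionHom_δ i Y
  · rw [← Functor.map_comp, sectionHom_comp_precompHom, CategoryTheory.Functor.map_id]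
end

section
/- With Δ/C the category of simplices of a small category C and [Δ/C] its quotient by the equivalence relation generated by elementary equivalences of sections of degeneracies, the quotient functor Δ/C → [Δ/C] is the localization of Δ/C at the class of surjections: any functor Δ/C → D sending all surjections to isomorphisms factors uniquely through [Δ/C]. -/
open CategoryTheory

/-!
A surjection of `Δ` is a composite of degeneracies `σ i` followed by an isomorphism, so
it suffices that the quotient inverts the map `X ∘ σ i ⟶ X` with underlying map `σ i`.
Its section `δ (i + 1)` is a one-sided inverse; the other composite equals
`δ (i + 2) ≫ σ i`, and the elementary relation for the two sections `δ (i + 1)`,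
`δ (i + 2)` of `σ (i + 1)` identifies it with `δ (i + 1) ≫ σ i = 𝟙`. Conversely, a
functor inverting a surjection identifies any two of its sections, hence factors through
the quotient.
-/

open SimplexCategory Simplicial

def CategoryTheory.CostructuredArrow.homMkOfSection {A : Type u₁} {B : Type u₂}
    [Category.{v₁} A] [Category.{v₂} B] {S : A ⥤ B} {T : B} {a b : A} {s : a ⟶ b}
    {d : b ⟶ a} (h : d ≫ s = 𝟙 b) (Z : S.obj b ⟶ T) : mk Z ⟶ mk (S.map s ≫ Z) :=
  homMk d (by simp [← S.map_comp_assoc, h])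

namespace SimplexOver

variable {C : Type} [SmallCategory C]

lemma isIso_of_bijective {A B : SimplexOver C} (f : A ⟶ B)
    (hf : Function.Bijective f.left.toOrderHom) : IsIso f :=
  have : IsIso ((CostructuredArrow.proj _ _).map f) := SimplexCategory.isIso_of_bijective hf
  isIso_of_reflects_iso f (CostructuredArrow.proj _ _)

lemma elemRel_homMkOfSection_σ {n : ℕ} {i : Fin (n + 1)} {d d' : ⦋n⦌ ⟶ ⦋n + 1⦌}
    (h : d ≫ σ i = 𝟙 _) (h' : d' ≫ σ i = 𝟙 _) (Z : toCat.obj ⦋n⦌ ⟶ Cat.of C) :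
    elemRel C (CostructuredArrow.homMkOfSection h Z) (CostructuredArrow.homMkOfSection h' Z) :=
  ⟨σ i, epi_iff_surjective.1 inferInstance, rfl, rfl, h, h'⟩

lemma isIso_map_mkPrecomp_σ {n : ℕ} (Y : toCat.obj ⦋n⦌ ⟶ Cat.of C) (i : Fin (n + 1)) :
    IsIso ((Quotient.functor (elemRel C)).map (CostructuredArrow.mkPrecomp Y (σ i))) := by
  let Q := Quotient.functor (elemRel C)
  let X := toCat.map (σ i) ≫ Y
  let e : CostructuredArrow.mk X ⟶ CostructuredArrow.mk Y := CostructuredArrow.mkPrecomp Y (σ i)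
  let g := CostructuredArrow.homMkOfSection (δ_comp_σ_succ (i := i)) Y
  let u₁ := CostructuredArrow.homMkOfSection (δ_comp_σ_self (i := i.succ)) X
  let u₂ := CostructuredArrow.homMkOfSection (δ_comp_σ_succ (i := i.succ)) X
  let r : CostructuredArrow.mk (toCat.map (σ i.succ) ≫ X) ⟶ CostructuredArrow.mk X :=
    CostructuredArrow.homMk (σ i.castSucc) <| by
      simp only [X, CostructuredArrow.mk_hom_eq_self, ← Functor.map_comp_assoc,
        σ_comp_σ (le_refl i)]
  have hg : g ≫ e = 𝟙 _ := CostructuredArrow.ext _ _ δ_comp_σ_succ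
  have he : e ≫ g = u₂ ≫ r :=
    CostructuredArrow.ext _ _ (δ_comp_σ_of_gt (Fin.castSucc_lt_succ (i := i))).symm
  have hr : u₁ ≫ r = 𝟙 _ :=
    CostructuredArrow.ext _ _ (δ_comp_σ_succ' (Fin.succ_castSucc i).symm)
  have hu : Q.map u₁ = Q.map u₂ :=
    CategoryTheory.Quotient.sound _ (elemRel_homMkOfSection_σ _ _ X)
  refine ⟨Q.map g, ?_, ?_⟩
  · rw [← Q.map_comp, he, Q.map_comp, ← hu, ← Q.map_comp, hr, Q.map_id]
  · rw [← Q.map_comp, hg, Q.map_id]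

theorem isIso_map_of_surjective {n : ℕ} (X : toCat.obj ⦋n⦌ ⟶ Cat.of C) {B : SimplexOver C}
    (f : CostructuredArrow.mk X ⟶ B) (hf : Function.Surjective f.left.toOrderHom) :
    IsIso ((Quotient.functor (elemRel C)).map f) := by
  induction n generalizing B with
  | zero =>
    have := isIso_of_bijective f ⟨fun _ _ _ ↦ Subsingleton.elim (α := Fin 1) _ _, hf⟩
    infer_instance
  | succ n ih =>
    by_cases hinj : Function.Injective f.left.toOrderHom
    · have := isIso_of_bijective f ⟨hinj, hf⟩
      infer_instance
    obtain ⟨i, θ, hθ⟩ := eq_σ_comp_of_not_injective f.left hinj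
    have hX : X = toCat.map (σ i) ≫ toCat.map θ ≫ B.hom := by
      rw [← Functor.map_comp_assoc, ← hθ]
      exact (CostructuredArrow.w f).symm
    subst hX
    have hfactor : f = CostructuredArrow.mkPrecomp _ (σ i) ≫ CostructuredArrow.homMk' B θ :=
      CostructuredArrow.ext _ _ hθ
    have hθ_surj : Function.Surjective θ.toOrderHom := by
      rw [hθ] at hf
      exact Function.Surjective.of_comp hf
    have := isIso_map_mkPrecomp_σ (toCat.map θ ≫ B.hom) i
    have := ih _ (CostructuredArrow.homMk' B θ) hθ_surj
    rw [hfactor, Functor.map_comp]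
    infer_instance

end SimplexOver

lemma CategoryTheory.Functor.map_eq_of_elemRel {C : Type} [SmallCategory C] {D : Type*}
    [Category D] {F : SimplexOver C ⥤ D}
    (hF : ∀ (A B : SimplexOver C) (f : A ⟶ B),
      Function.Surjective f.left.toOrderHom → IsIso (F.map f))
    {A B : SimplexOver C} {f g : A ⟶ B} (h : elemRel C f g) : F.map f = F.map g := by
  obtain ⟨s, hs, -, hw, hf, hg⟩ := h
  let p : B ⟶ A := CostructuredArrow.homMk s hw.symm
  have := hF B A p hs
  have hfp : f ≫ p = 𝟙 A := CostructuredArrow.ext _ _ hf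
  have hgp : g ≫ p = 𝟙 A := CostructuredArrow.ext _ _ hg
  rw [← cancel_mono (F.map p), ← F.map_comp, ← F.map_comp, hfp, hgp]

/-- Lemma 18: the quotient functor `Δ/C ⥤ [Δ/C]` is the localization of `Δ/C` at the
class of surjections: it sends surjections to isomorphisms, and any functor sending all
surjections to isomorphisms factors uniquely through it. -/
theorem quotient_is_localization_at_surjections (C : Type) [SmallCategory C]
    (D : Type u) [Category.{v} D] (F : SimplexOver C ⥤ D)
    (hF : ∀ (A B : SimplexOver C) (f : A ⟶ B),
      Function.Surjective f.left.toOrderHom → IsIso (F.map f)) :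
    (∀ (A B : SimplexOver C) (f : A ⟶ B),
      Function.Surjective f.left.toOrderHom →
        IsIso ((CategoryTheory.Quotient.functor (elemRel C)).map f)) ∧
    ∃! F' : SdQuot C ⥤ D, CategoryTheory.Quotient.functor (elemRel C) ⋙ F' = F :=
  ⟨fun A _ f hf ↦ SimplexOver.isIso_map_of_surjective A.hom f hf,
    ⟨CategoryTheory.Quotient.lift _ F fun _ _ _ _ ↦ F.map_eq_of_elemRel hF,
      CategoryTheory.Quotient.lift_spec _ _ _,
      fun Φ hΦ ↦ CategoryTheory.Quotient.lift_unique _ _ _ Φ hΦ⟩⟩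
end

section
/- Let C be a small category and Sd(C) the full subcategory of [Δ/C] spanned by the nondegenerate simplices of N(C). If there is a nonidentity morphism X → Y in Sd(C), then dim(X) < dim(Y), where dim denotes the simplicial dimension. In particular, every isomorphism of Sd(C) is an identity, and the dimension function is a linear extension making Sd(C) a direct category. -/
open CategoryTheory

lemma SimplexCategory.eq_eqToHom_of_mono {x y : SimplexCategory} (f : x ⟶ y) [Mono f]
    (h : x.len = y.len) : f = eqToHom (SimplexCategory.ext h) := by
  obtain rfl : x = y := SimplexCategory.ext h
  exact SimplexCategory.eq_id_of_mono f

lemma CostructuredArrow.exists_eq_eqToHom_of_left_eq_eqToHom {A B : Type*} [Category* A]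
    [Category* B] {S : A ⥤ B} {T : B} {X Y : CostructuredArrow S T} (f : X ⟶ Y)
    (h : X.left = Y.left) (hf : f.left = eqToHom h) : ∃ hXY : X = Y, f = eqToHom hXY := by
  obtain rfl : X = Y := CostructuredArrow.obj_ext X Y h (by rw [← hf]; exact CostructuredArrow.w f)
  exact ⟨rfl, CostructuredArrow.ext _ _ (by simpa using hf)⟩

open SimplexCategory Limits in
/-- Factor `f.left` as an epi followed by a mono: nondegeneracy of `A` forces the epi to be
injective. -/
lemma Nondeg.mono_left {C : Type} [SmallCategory C] {A B : SimplexOver C} (hA : Nondeg A)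
    (f : A ⟶ B) : Mono f.left := by
  have hfac : factorThruImage f.left ≫ image.ι f.left = f.left := image.fac f.left
  have hepi_inj : Function.Injective (factorThruImage f.left).toOrderHom := by
    refine hA _ _ (epi_iff_surjective.1 inferInstance)
      ⟨toCat.map (image.ι f.left) ≫ B.hom, ?_⟩
    rw [← Functor.map_comp_assoc, hfac, CostructuredArrow.w f]
  have : Mono (factorThruImage f.left) := mono_iff_injective.2 hepi_inj
  rw [← hfac]
  infer_instance

section Sd

variable {C : Type} [SmallCategory C]

lemma Sd.exists_lift_mono_left {X Y : Sd C} (f : X ⟶ Y) :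
    ∃ f₀ : X.obj.as ⟶ Y.obj.as, (Quotient.functor (elemRel C)).map f₀ = f.hom ∧ Mono f₀.left :=
  let ⟨f₀, hf₀⟩ := (Quotient.functor (elemRel C)).map_surjective f.hom
  ⟨f₀, hf₀, X.property.mono_left f₀⟩

lemma dimS_le_of_hom {X Y : Sd C} (f : X ⟶ Y) : dimS X ≤ dimS Y := by
  obtain ⟨f₀, -, _⟩ := Sd.exists_lift_mono_left f
  exact SimplexCategory.len_le_of_mono f₀.left

lemma exists_eq_eqToHom_of_dimS_eq {X Y : Sd C} (f : X ⟶ Y) (h : dimS X = dimS Y) :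
    ∃ hXY : X = Y, f = eqToHom hXY := by
  obtain ⟨f₀, hf₀, _⟩ := Sd.exists_lift_mono_left f
  obtain ⟨hobj, rfl⟩ := CostructuredArrow.exists_eq_eqToHom_of_left_eq_eqToHom f₀ _
    (SimplexCategory.eq_eqToHom_of_mono f₀.left h)
  obtain rfl : X = Y := ObjectProperty.FullSubcategory.ext (Quotient.ext hobj)
  refine ⟨rfl, ?_⟩
  ext
  rw [← hf₀]
  simp only [eqToHom_refl]
  rfl

end Sd

/-- Lemma 19 and Corollary 20: in `Sd(C)`, morphisms weakly increase dimension, any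
morphism which does not strictly increase dimension is an identity, and every
isomorphism is an identity; `dimS` is a linear extension making `Sd(C)` a direct
category. -/
theorem sd_is_direct (C : Type) [SmallCategory C] :
    (∀ (X Y : Sd C) (_ : X ⟶ Y), dimS X ≤ dimS Y) ∧
    (∀ (X Y : Sd C) (f : X ⟶ Y),
      dimS X < dimS Y ∨ ∃ h : X = Y, f = eqToHom h) ∧
    (∀ (X Y : Sd C) (e : X ≅ Y), ∃ h : X = Y, e.hom = eqToHom h) :=
  ⟨fun _ _ f => dimS_le_of_hom f,
   fun _ _ f => (dimS_le_of_hom f).lt_or_eq.imp_right (exists_eq_eqToHom_of_dimS_eq f),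
   fun _ _ e => exists_eq_eqToHom_of_dimS_eq e.hom
     (le_antisymm (dimS_le_of_hom e.hom) (dimS_le_of_hom e.inv))⟩
end

section
/- For every small category C, the double subdivision Sd²(C) = Sd(Sd(C)) is a partially ordered set: between any two objects there is at most one morphism, and the existence of morphisms in both directions forces the objects to be equal. -/
open CategoryTheory

/-!
A morphism of `Sd(C)` is represented by a map of simplices out of a nondegenerate simplex, and
such a map is injective on vertices: its surjective part would exhibit a degeneracy. So dimension
is monotone along morphisms of `Sd(C)`, and a morphism that does not raise it is an identity;
this already gives antisymmetry, for `Sd` of any category.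

For a nondegenerate simplex of the nerve of `Sd(C)`, an edge not raising the dimension would
be an identity, and the simplex would factor through the degeneracy collapsing that edge.
Hence dimension strictly increases along the simplex, and a map of simplices into it is
determined by the dimensions of the vertices, which makes the hom-sets of `Sd²(C)` subsingletons.
-/

open SimplexCategory Simplicial Limits

lemma CategoryTheory.Functor.comp_eq_comp_of_natTrans {C D : Type*} [Category C] [Category D]
    {G H : C ⥤ C} (τ : G ⟶ H) (F : C ⥤ D) (hobj : ∀ a, F.obj (G.obj a) = F.obj (H.obj a))
    (hmap : ∀ a, F.map (τ.app a) = eqToHom (hobj a)) :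
    G ⋙ F = H ⋙ F := by
  refine Functor.ext hobj fun a b f => ?_
  have hnat := congrArg F.map (τ.naturality f)
  rw [F.map_comp, F.map_comp, hmap, hmap] at hnat
  simp [← reassoc_of% hnat]

namespace SimplexCategory

lemma σ_comp_δ_succ_apply {n : ℕ} (k : Fin (n + 1)) (j : Fin (n + 2)) :
    (σ k ≫ δ k.succ).toOrderHom j = if j = k.succ then k.castSucc else j := by
  split_ifs with hj
  · subst hj
    show k.succ.succAbove (k.predAbove k.succ) = _
    simp
  · exact Fin.succ_succAbove_predAbove hj

lemma functor_σ_comp_δ_succ_comp_eq {D : Type*} [Category D] {n : ℕ}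
    (F : Fin (n + 2) ⥤ D) (k : Fin (n + 1)) (hobj : F.obj k.castSucc = F.obj k.succ)
    (hmap : F.map (homOfLE k.castSucc_le_succ) = eqToHom hobj) :
    (σ k ≫ δ k.succ).toOrderHom.monotone.functor ⋙ F = F := by
  have hle : ∀ j : Fin (n + 2), (σ k ≫ δ k.succ).toOrderHom j ≤ j := by
    intro j
    rw [σ_comp_δ_succ_apply]
    split_ifs with hj
    · exact hj ▸ k.castSucc_le_succ
    · exact le_rfl
  let G := (σ k ≫ δ k.succ).toOrderHom.monotone.functor
  let τ : G ⟶ 𝟭 (Fin (n + 2)) := { app j := homOfLE (hle j) }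
  have hτ : ∀ j, ∃ h, F.map (τ.app j) = eqToHom h := by
    intro j
    by_cases hj : j = k.succ
    · subst hj
      have e : G.obj k.succ = k.castSucc := by
        show (σ k ≫ δ k.succ).toOrderHom k.succ = _
        rw [σ_comp_δ_succ_apply, if_pos rfl]
      rw [Subsingleton.elim (τ.app _) (eqToHom e ≫ homOfLE k.castSucc_le_succ), F.map_comp,
        eqToHom_map, hmap, eqToHom_trans]
      exact ⟨_, rfl⟩
    · have e : G.obj j = j := by
        show (σ k ≫ δ k.succ).toOrderHom j = _
        rw [σ_comp_δ_succ_apply, if_neg hj]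
      rw [Subsingleton.elim (τ.app _) (eqToHom e), eqToHom_map]
      exact ⟨_, rfl⟩
  choose hobj' hmap' using hτ
  exact Functor.comp_eq_comp_of_natTrans τ F hobj' hmap'

end SimplexCategory

section

variable {C : Type} [SmallCategory C]

lemma Nondeg.injective_left {A B : SimplexOver C} (hA : Nondeg A) (f : A ⟶ B) :
    Function.Injective f.left.toOrderHom := by
  have fac : factorThruImage f.left ≫ image.ι f.left = f.left := image.fac f.left
  have hinj : Function.Injective (factorThruImage f.left).toOrderHom := by
    refine hA _ _ (epi_iff_surjective.mp inferInstance)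
      ⟨toCat.map (image.ι f.left) ≫ B.hom, ?_⟩
    rw [← Functor.map_comp_assoc, fac, CostructuredArrow.w f]
  rw [← fac, comp_toOrderHom]
  exact (mono_iff_injective.mp inferInstance).comp hinj

lemma SimplexOver.eq_eqToHom_of_injective_left {A B : SimplexOver C} (f : A ⟶ B)
    (hf : Function.Injective f.left.toOrderHom) (hlen : B.left.len ≤ A.left.len) :
    ∃ h : A = B, f = eqToHom h := by
  obtain ⟨a, ⟨⟨⟩⟩, F⟩ := A
  obtain ⟨b, ⟨⟨⟩⟩, G⟩ := B
  obtain rfl : a = b := SimplexCategory.ext <| hlen.antisymm' <| by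
    simpa using Fintype.card_le_of_injective _ hf
  have : Mono f.left := mono_iff_injective.mpr hf
  have hid : f.left = 𝟙 a := eq_id_of_mono f.left
  have hw := CostructuredArrow.w f
  rw [hid, CategoryTheory.Functor.map_id, Category.id_comp] at hw
  subst hw
  exact ⟨rfl, CostructuredArrow.hom_ext _ _ hid⟩

lemma SimplexOver.hom_obj_left_apply {A B : SimplexOver C} (f : A ⟶ B)
    (j : Fin (A.left.len + 1)) :
    B.hom.toFunctor.obj (f.left.toOrderHom j) = A.hom.toFunctor.obj j :=
  congrArg (fun G => G.toFunctor.obj j) (CostructuredArrow.w f)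

namespace Sd

lemma dimS_le_of_hom {X Y : Sd C} (u : X ⟶ Y) : dimS X ≤ dimS Y := by
  obtain ⟨f, -⟩ := (Quotient.functor _).map_surjective u.hom
  simpa [dimS] using Fintype.card_le_of_injective _ (X.property.injective_left f)

lemma eq_eqToHom_of_dimS_le {X Y : Sd C} (u : X ⟶ Y) (h : dimS Y ≤ dimS X) :
    ∃ h : X = Y, u = eqToHom h := by
  obtain ⟨⟨A⟩, hA⟩ := X
  obtain ⟨⟨B⟩, hB⟩ := Y
  obtain ⟨f, hf⟩ := (Quotient.functor _).map_surjective u.hom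
  obtain ⟨rfl, rfl⟩ := SimplexOver.eq_eqToHom_of_injective_left f (hA.injective_left f) h
  refine ⟨rfl, ObjectProperty.hom_ext _ ?_⟩
  exact hf.symm.trans ((Quotient.functor _).map_id _)

lemma eq_of_hom_of_hom {X Y : Sd C} (u : X ⟶ Y) (v : Y ⟶ X) : X = Y :=
  (eq_eqToHom_of_dimS_le u (dimS_le_of_hom v)).1

lemma subsingleton_hom {X Y : Sd C} (h : Subsingleton (X.obj.as ⟶ Y.obj.as)) :
    Subsingleton (X ⟶ Y) :=
  ⟨fun _ _ => ObjectProperty.hom_ext _ <|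
    ((Quotient.functor _).map_surjective.subsingleton).elim _ _⟩

end Sd

lemma Nondeg.dimS_castSucc_lt_dimS_succ {n : ℕ} {F : toCat.obj ⦋n + 1⦌ ⟶ Cat.of (Sd C)}
    (hF : Nondeg (CostructuredArrow.mk F)) (k : Fin (n + 1)) :
    dimS (F.toFunctor.obj k.castSucc) < dimS (F.toFunctor.obj k.succ) := by
  by_contra! h
  obtain ⟨hobj, hmap⟩ := Sd.eq_eqToHom_of_dimS_le
    (F.toFunctor.map (@homOfLE (Fin (n + 2)) _ _ _ k.castSucc_le_succ)) h
  have hfac : F = toCat.map (σ k) ≫ toCat.map (δ k.succ) ≫ F := by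
    rw [← Category.assoc, ← Functor.map_comp]
    exact (Cat.ext (functor_σ_comp_δ_succ_comp_eq F.toFunctor k hobj hmap)).symm
  have hinj := hF ⦋n⦌ (σ k) (epi_iff_surjective.mp inferInstance) ⟨_, hfac⟩
  have : k.castSucc = k.succ := hinj (by simp [σ])
  simp [Fin.ext_iff] at this

lemma Nondeg.strictMono_dimS {B : SimplexOver (Sd C)} (hB : Nondeg B) :
    StrictMono fun j : Fin (B.left.len + 1) => dimS (B.hom.toFunctor.obj j) := by
  obtain ⟨⟨_ | n⟩, ⟨⟨⟩⟩, F⟩ := B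
  · exact Subsingleton.strictMono (α := Fin 1) _
  · exact Fin.strictMono_iff_lt_succ.2 hB.dimS_castSucc_lt_dimS_succ

lemma Nondeg.subsingleton_hom {A B : SimplexOver (Sd C)} (hB : Nondeg B) :
    Subsingleton (A ⟶ B) := by
  refine ⟨fun f g => CostructuredArrow.hom_ext _ _ ?_⟩
  ext j : 3
  apply hB.strictMono_dimS.injective
  simp only [SimplexOver.hom_obj_left_apply]

end

/-- Theorem 21: the double subdivision `Sd²(C)` of any small category is a poset:
hom-sets have at most one element, and morphisms in both directions force equality. -/
theorem sd_sd_is_poset (C : Type) [SmallCategory C] :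
    (∀ X Y : Sd (Sd C), Subsingleton (X ⟶ Y)) ∧
    (∀ X Y : Sd (Sd C), (X ⟶ Y) → (Y ⟶ X) → X = Y) :=
  ⟨fun _ Y => Sd.subsingleton_hom Y.property.subsingleton_hom, fun _ _ => Sd.eq_of_hom_of_hom⟩
end
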